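/- Let a : ℝ → ℝ be a C^∞ function with a(s) = 0 for all s ≤ 0 and |a(s)| ≤ K for all s, for some constant K. Then each of the vector fields X̃, Ỹ, Z̃ of the Cairns–Ghys perturbation is complete: for every p₀ ∈ ℝ³ there exists a curve γ : ℝ → ℝ³ with γ(0) = p₀ such that for every t ∈ ℝ, γ has derivative X̃(γ(t)) at t (and likewise for Ỹ and Z̃). -/

import Mathlib

noncomputable section

/-- The linear vector field `X(x,y,z) = (0,z,y)` on `ℝ³`. -/
def Xf (p : Fin 3 → ℝ) : Fin 3 → ℝ := ![0, p 2, p 1]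

/-- The linear vector field `Y(x,y,z) = (z,0,x)` on `ℝ³`. -/
def Yf (p : Fin 3 → ℝ) : Fin 3 → ℝ := ![p 2, 0, p 0]

/-- The linear vector field `Z(x,y,z) = (−y,x,0)` on `ℝ³`. -/
def Zf (p : Fin 3 → ℝ) : Fin 3 → ℝ := ![-p 1, p 0, 0]

/-- The Lie bracket of vector fields: `[V,W](p) = DW(p)(V(p)) − DV(p)(W(p))`. -/
def lieBr (V W : (Fin 3 → ℝ) → (Fin 3 → ℝ)) (p : Fin 3 → ℝ) : Fin 3 → ℝ :=
  fderiv ℝ W p (V p) - fderiv ℝ V p (W p)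

/-- The radial vector field `R(x,y,z) = (x,y,z)`. -/
def Rf (p : Fin 3 → ℝ) : Fin 3 → ℝ := p

/-- The quadratic form `x² + y² − z²`. -/
def Qf (p : Fin 3 → ℝ) : ℝ := (p 0) ^ 2 + (p 1) ^ 2 - (p 2) ^ 2

/-- `A(x,y,z) = a(x²+y²−z²)/(x²+y²)` when `x²+y² ≠ 0`, and `0` when `x²+y² = 0`. -/
def Afun (a : ℝ → ℝ) (p : Fin 3 → ℝ) : ℝ :=
  if (p 0) ^ 2 + (p 1) ^ 2 = 0 then 0 else a (Qf p) / ((p 0) ^ 2 + (p 1) ^ 2)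

/-- `f = x·A`. -/
def ff (a : ℝ → ℝ) (p : Fin 3 → ℝ) : ℝ := p 0 * Afun a p

/-- `g = −y·A`. -/
def gf (a : ℝ → ℝ) (p : Fin 3 → ℝ) : ℝ := -p 1 * Afun a p

/-- The Cairns–Ghys perturbed field `X̃ = X + f·R`. -/
def Xt (a : ℝ → ℝ) (p : Fin 3 → ℝ) : Fin 3 → ℝ := Xf p + ff a p • Rf p

/-- The Cairns–Ghys perturbed field `Ỹ = Y + g·R`. -/
def Yt (a : ℝ → ℝ) (p : Fin 3 → ℝ) : Fin 3 → ℝ := Yf p + gf a p • Rf p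

/-- The Cairns–Ghys perturbed field `Z̃ = Z`. -/
def Zt (p : Fin 3 → ℝ) : Fin 3 → ℝ := Zf p

/-!
Since `a (-z²) = 0`, Hadamard's lemma writes `A(p) = ∫₀¹ a'(t (x² + y²) - z²) dt`, so `A` is
locally Lipschitz. The coefficients `f`, `g` are bounded: where `x² + y² ≤ 1` the integrand is
bounded because `a'` vanishes on `(-∞, 0]`, and elsewhere `|x|, |y| ≤ x² + y²` while
`|A| ≤ K / (x² + y²)`. Hence each field is locally Lipschitz with linear growth, and such a field
is complete: composing it with the radial retraction onto a large ball gives a globally Lipschitz,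
bounded field, whose Picard–Lindelöf solution on `[-T, T]` stays inside the ball by Grönwall's
inequality and so solves the original equation; by uniqueness these solutions agree on overlaps
and patch together to a global integral curve.
-/

open Set Metric Real Filter
open scoped NNReal Topology

lemma div_max_mul_self {S : ℝ} (hS : 0 < S) (r : ℝ) : S / max S r * r = min S r := by
  rcases le_total r S with h | h
  · rw [max_eq_left h, min_eq_right h, div_self hS.ne', one_mul]
  · rw [max_eq_right h, min_eq_left h, div_mul_cancel₀ _ (hS.trans_le h).ne']

section LinearGrowth

variable {E : Type*} [NormedAddCommGroup E] [NormedSpace ℝ E]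

lemma gronwallBound_self (δ K x : ℝ) : gronwallBound δ K K x = (1 + δ) * exp (K * x) - 1 := by
  rcases eq_or_ne K 0 with rfl | hK
  · simp [gronwallBound_K0]
  · rw [gronwallBound_of_K_ne_0 hK, div_self hK]
    ring

lemma IsIntegralCurveOn.one_add_norm_le {γ : ℝ → E} {W : E → E} {C T : ℝ}
    (hγ : IsIntegralCurveOn γ (fun _ => W) (Icc 0 T)) (hW : ∀ p, ‖W p‖ ≤ C * (1 + ‖p‖)) :
    ∀ t ∈ Icc 0 T, 1 + ‖γ t‖ ≤ (1 + ‖γ 0‖) * exp (C * t) := by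
  intro t ht
  have h := norm_le_gronwallBound_of_norm_deriv_right_le hγ.continuousOn
    (fun s hs => (hγ s (Ico_subset_Icc_self hs)).mono_of_mem_nhdsWithin
      (Icc_mem_nhdsGE_of_mem hs))
    le_rfl (fun s _ => (hW (γ s)).trans_eq (by ring)) t ht
  rw [sub_zero, gronwallBound_self] at h
  linarith

lemma IsIntegralCurveOn.one_add_norm_le_abs {γ : ℝ → E} {W : E → E} {C T : ℝ}
    (hγ : IsIntegralCurveOn γ (fun _ => W) (Icc (-T) T)) (hW : ∀ p, ‖W p‖ ≤ C * (1 + ‖p‖)) :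
    ∀ t ∈ Icc (-T) T, 1 + ‖γ t‖ ≤ (1 + ‖γ 0‖) * exp (C * |t|) := by
  intro t ht
  rcases le_total 0 t with h0 | h0
  · rw [abs_of_nonneg h0]
    exact (hγ.mono (Icc_subset_Icc_left (by linarith [ht.2]))).one_add_norm_le hW t ⟨h0, ht.2⟩
  · have hback : IsIntegralCurveOn (γ ∘ (· * -1)) (fun _ => (-1 : ℝ) • W) (Icc 0 T) :=
      (hγ.comp_mul (-1)).mono fun s hs => ⟨by linarith [hs.2], by linarith [hs.1, ht.1]⟩
    have h := hback.one_add_norm_le (fun p => by simpa using hW p) (-t)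
      ⟨by linarith, by linarith [ht.1]⟩
    simpa [abs_of_nonpos h0] using h

variable {S : ℝ}

def radialRetraction (S : ℝ) (p : E) : E := (S / max S ‖p‖) • p

lemma norm_radialRetraction (hS : 0 < S) (p : E) : ‖radialRetraction S p‖ = min S ‖p‖ := by
  rw [radialRetraction, norm_smul, Real.norm_of_nonneg (by positivity),
    div_max_mul_self hS]

lemma radialRetraction_of_norm_le (hS : 0 < S) {p : E} (hp : ‖p‖ ≤ S) :
    radialRetraction S p = p := by
  rw [radialRetraction, max_eq_left hp, div_self hS.ne', one_smul]

lemma lipschitzWith_radialRetraction (hS : 0 < S) :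
    LipschitzWith 2 (radialRetraction (E := E) S) := by
  refine LipschitzWith.of_dist_le_mul fun p q => ?_
  wlog hpq : ‖q‖ ≤ ‖p‖ generalizing p q
  · rw [dist_comm, dist_comm p]
    exact this q p (le_of_not_ge hpq)
  set c := S / max S ‖p‖
  set c' := S / max S ‖q‖
  have hc1 : c ≤ 1 := div_le_one_of_le₀ (le_max_left _ _) (by positivity)
  have hcc' : c ≤ c' :=
    div_le_div_of_nonneg_left hS.le (lt_max_of_lt_left hS) (max_le_max_left _ hpq)
  have hmin : c' * ‖q‖ ≤ c * ‖p‖ := by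
    rw [div_max_mul_self hS, div_max_mul_self hS]
    exact min_le_min_left _ hpq
  have hpq' := norm_sub_norm_le p q
  calc dist (radialRetraction S p) (radialRetraction S q)
      = ‖c • (p - q) - (c' - c) • q‖ := by
        rw [dist_eq_norm, radialRetraction, radialRetraction]
        congr 1
        module
    _ ≤ c * ‖p - q‖ + (c' - c) * ‖q‖ := by
        refine (norm_sub_le _ _).trans_eq ?_
        rw [norm_smul, norm_smul, Real.norm_of_nonneg (by positivity),
          Real.norm_of_nonneg (by linarith)]
    _ ≤ 2 * dist p q := by
        rw [dist_eq_norm]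
        nlinarith [norm_nonneg (p - q)]

variable {V : E → E} {C : ℝ}

theorem exists_forall_mem_Ioo_hasDerivAt_of_linearGrowth [CompleteSpace E]
    (hV : ∀ R, ∃ K, LipschitzOnWith K V (closedBall 0 R))
    (hgrowth : ∀ p, ‖V p‖ ≤ C * (1 + ‖p‖)) (p₀ : E) (T : ℝ≥0) :
    ∃ α : ℝ → E, α 0 = p₀ ∧ ∀ t ∈ Ioo (-T : ℝ) T,
      HasDerivAt α (V (α t)) t ∧ 1 + ‖α t‖ ≤ (1 + ‖p₀‖) * exp (C * |t|) := by
  have hC : 0 ≤ C := by simpa using (norm_nonneg _).trans (hgrowth 0)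
  set S := (1 + ‖p₀‖) * exp (C * T)
  have hS : 0 < S := by positivity
  obtain ⟨K, hK⟩ := hV S
  set W := V ∘ radialRetraction S
  have hWlip : LipschitzOnWith (K * 2) W univ :=
    hK.comp (lipschitzWith_radialRetraction hS).lipschitzOnWith
      fun p _ => mem_closedBall_zero_iff.2 ((norm_radialRetraction hS p).trans_le (min_le_left _ _))
  have hWgrowth : ∀ p, ‖W p‖ ≤ C * (1 + ‖p‖) := fun p => (hgrowth _).trans <| by
    gcongr
    exact (norm_radialRetraction hS p).trans_le (min_le_right _ _)
  set L : ℝ≥0 := ⟨C * (1 + S), by positivity⟩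
  have hPL : IsPicardLindelof (fun _ => W) (tmin := -T) (tmax := T) ⟨0, by simp⟩ p₀ (L * T) 0 L
      (K * 2) := .of_time_independent
    (fun p _ => show ‖W p‖ ≤ C * (1 + S) from (hgrowth _).trans <| by
      gcongr
      exact (norm_radialRetraction hS p).trans_le (min_le_left _ _))
    (hWlip.mono (subset_univ _)) (by simp)
  obtain ⟨α, hα0, hα⟩ := hPL.exists_eq_forall_mem_Icc_hasDerivWithinAt₀
  have hbound := IsIntegralCurveOn.one_add_norm_le_abs hα hWgrowth
  refine ⟨α, hα0, fun t ht => ?_⟩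
  have htT := Ioo_subset_Icc_self ht
  have hαt : 1 + ‖α t‖ ≤ (1 + ‖p₀‖) * exp (C * |t|) := by simpa [hα0] using hbound t htT
  have hαS : ‖α t‖ ≤ S := by
    have : exp (C * |t|) ≤ exp (C * T) := by gcongr; exact abs_le.2 ⟨htT.1, htT.2⟩
    nlinarith [mul_le_mul_of_nonneg_left this (by positivity : (0 : ℝ) ≤ 1 + ‖p₀‖)]
  refine ⟨?_, hαt⟩
  simpa [W, radialRetraction_of_norm_le hS hαS] using
    (hα t htT).hasDerivAt (Icc_mem_nhds ht.1 ht.2)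

theorem exists_isIntegralCurve_of_linearGrowth [CompleteSpace E]
    (hV : ∀ R, ∃ K, LipschitzOnWith K V (closedBall 0 R))
    (hgrowth : ∀ p, ‖V p‖ ≤ C * (1 + ‖p‖)) (p₀ : E) :
    ∃ γ : ℝ → E, γ 0 = p₀ ∧ IsIntegralCurve γ fun _ => V := by
  have hC : 0 ≤ C := by simpa using (norm_nonneg _).trans (hgrowth 0)
  choose α hα0 hα using exists_forall_mem_Ioo_hasDerivAt_of_linearGrowth hV hgrowth p₀
  have hagree : ∀ T T' : ℝ≥0, ∀ t : ℝ, |t| < min (T : ℝ) T' → α T t = α T' t := by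
    intro T T' t ht
    set m := min (T : ℝ) T'
    obtain ⟨K, hK⟩ := hV ((1 + ‖p₀‖) * exp (C * m))
    have hsol : ∀ T'' : ℝ≥0, m ≤ T'' → ∀ s ∈ Ioo (-m) m,
        HasDerivAt (α T'') (V (α T'' s)) s ∧
          α T'' s ∈ closedBall 0 ((1 + ‖p₀‖) * exp (C * m)) := by
      intro T'' hT'' s hs
      obtain ⟨hderiv, hnorm⟩ := hα T'' s ⟨by linarith [hs.1], by linarith [hs.2]⟩
      refine ⟨hderiv, mem_closedBall_zero_iff.2 ?_⟩
      have : exp (C * |s|) ≤ exp (C * m) := by gcongr; exact abs_le.2 ⟨hs.1.le, hs.2.le⟩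
      nlinarith [mul_le_mul_of_nonneg_left this (by positivity : (0 : ℝ) ≤ 1 + ‖p₀‖)]
    have hm : 0 < m := (abs_nonneg t).trans_lt ht
    exact ODE_solution_unique_of_mem_Ioo (fun _ _ => hK) (t₀ := 0) ⟨by linarith, hm⟩
      (hsol T (min_le_left _ _)) (hsol T' (min_le_right _ _)) (by rw [hα0, hα0]) (abs_lt.1 ht)
  refine ⟨fun t => α (‖t‖₊ + 1) t, hα0 _, fun t => ?_⟩
  have ht : |t| < ((‖t‖₊ + 1 : ℝ≥0) : ℝ) := by simp
  refine ((hα _ t (abs_lt.1 ht)).1).congr_of_eventuallyEq ?_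
  filter_upwards [Ioo_mem_nhds (abs_lt.1 ht).1 (abs_lt.1 ht).2] with s hs
  exact hagree _ _ s (lt_min (by simp) (abs_lt.2 hs))

theorem LocallyLipschitz.exists_isIntegralCurve_of_linearGrowth [ProperSpace E]
    (hV : LocallyLipschitz V) (hgrowth : ∀ p, ‖V p‖ ≤ C * (1 + ‖p‖)) (p₀ : E) :
    ∃ γ : ℝ → E, γ 0 = p₀ ∧ IsIntegralCurve γ fun _ => V :=
  _root_.exists_isIntegralCurve_of_linearGrowth
    (fun R => hV.locallyLipschitzOn.exists_lipschitzOnWith_of_compact (isCompact_closedBall 0 R))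
    hgrowth p₀

end LinearGrowth

theorem LocallyLipschitz.intervalIntegral {E F : Type*} [PseudoMetricSpace E] [ProperSpace E]
    [NormedAddCommGroup F] [NormedSpace ℝ F] {Φ : ℝ × E → F} (hΦ : LocallyLipschitz Φ)
    (a b : ℝ) : LocallyLipschitz fun p => ∫ t in a..b, Φ (t, p) := by
  intro p
  obtain ⟨K, hK⟩ := hΦ.locallyLipschitzOn.exists_lipschitzOnWith_of_compact
    (isCompact_uIcc.prod (isCompact_closedBall p 1))
  refine ⟨K * nndist b a, closedBall p 1, closedBall_mem_nhds p one_pos,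
    LipschitzOnWith.of_dist_le_mul fun q hq q' hq' => ?_⟩
  have hint (r : E) : IntervalIntegrable (fun t => Φ (t, r)) MeasureTheory.volume a b :=
    (hΦ.continuous.comp (Continuous.prodMk_left r)).intervalIntegrable _ _
  have hbound : ∀ t ∈ uIoc a b, ‖Φ (t, q) - Φ (t, q')‖ ≤ K * dist q q' := fun t ht => by
    rw [← dist_eq_norm]
    calc dist (Φ (t, q)) (Φ (t, q')) ≤ K * dist (t, q) (t, q') :=
          hK.dist_le_mul _ ⟨uIoc_subset_uIcc ht, hq⟩ _ ⟨uIoc_subset_uIcc ht, hq'⟩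
      _ = K * dist q q' := by simp [Prod.dist_eq]
  rw [dist_eq_norm, ← intervalIntegral.integral_sub (hint q) (hint q')]
  calc _ ≤ K * dist q q' * |b - a| := intervalIntegral.norm_integral_le_of_norm_le_const hbound
    _ = ↑(K * nndist b a) * dist q q' := by
      rw [NNReal.coe_mul, coe_nndist, Real.dist_eq]
      ring

section Afun

variable {a : ℝ → ℝ}

lemma deriv_eq_zero_of_nonpos (ha : ContDiff ℝ 1 a) (ha0 : ∀ s ≤ 0, a s = 0) {s : ℝ}
    (hs : s ≤ 0) : deriv a s = 0 := by
  have hIio : EqOn (deriv a) 0 (Iio 0) := fun x hx => by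
    have : a =ᶠ[𝓝 x] fun _ => 0 :=
      eventually_of_mem (Iio_mem_nhds hx) fun y hy => ha0 y (le_of_lt hy)
    simp [this.deriv_eq]
  refine hIio.of_subset_closure (ha.continuous_deriv le_rfl).continuousOn continuousOn_const
    Iio_subset_Iic_self (by rw [closure_Iio]) hs

lemma exists_norm_deriv_le_of_le_one (ha : ContDiff ℝ 1 a) (ha0 : ∀ s ≤ 0, a s = 0) :
    ∃ L, ∀ s ≤ 1, ‖deriv a s‖ ≤ L := by
  obtain ⟨L, hL⟩ := (isCompact_Icc (a := (0 : ℝ)) (b := 1)).exists_bound_of_continuousOn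
    (ha.continuous_deriv le_rfl).continuousOn
  refine ⟨L, fun s hs => ?_⟩
  rcases le_total s 0 with h | h
  · rw [deriv_eq_zero_of_nonpos ha ha0 h, norm_zero]
    exact (norm_nonneg _).trans (hL 0 ⟨le_rfl, zero_le_one⟩)
  · exact hL s ⟨h, hs⟩

lemma Afun_eq_integral (ha : ContDiff ℝ 1 a) (ha0 : ∀ s ≤ 0, a s = 0) (p : Fin 3 → ℝ) :
    Afun a p = ∫ t in (0 : ℝ)..1, deriv a ((p 0 ^ 2 + p 1 ^ 2) * t - p 2 ^ 2) := by
  have hw : -p 2 ^ 2 ≤ 0 := neg_nonpos.2 (sq_nonneg _)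
  by_cases hu : p 0 ^ 2 + p 1 ^ 2 = 0
  · simp [Afun, hu, deriv_eq_zero_of_nonpos ha ha0 hw]
  · rw [intervalIntegral.integral_comp_mul_sub _ hu, intervalIntegral.integral_deriv_eq_sub
      (fun x _ => (ha.differentiable one_ne_zero).differentiableAt)
      ((ha.continuous_deriv le_rfl).intervalIntegrable _ _)]
    simp [Afun, Qf, hu, ha0 _ hw, div_eq_inv_mul]

lemma locallyLipschitz_Afun (ha : ContDiff ℝ 2 a) (ha0 : ∀ s ≤ 0, a s = 0) :
    LocallyLipschitz (Afun a) := by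
  have hda : ContDiff ℝ 1 (deriv a) := (contDiff_succ_iff_deriv.1 ha).2.2
  rw [funext (Afun_eq_integral (ha.of_le one_le_two) ha0)]
  exact (ContDiff.locallyLipschitz (by fun_prop)).intervalIntegral
    (Φ := fun q : ℝ × (Fin 3 → ℝ) => deriv a ((q.2 0 ^ 2 + q.2 1 ^ 2) * q.1 - q.2 2 ^ 2)) 0 1

lemma exists_abs_mul_Afun_le (ha : ContDiff ℝ 1 a) (ha0 : ∀ s ≤ 0, a s = 0) {K : ℝ}
    (haK : ∀ s, |a s| ≤ K) :
    ∃ M, ∀ (p : Fin 3 → ℝ) (c : ℝ), c ^ 2 ≤ p 0 ^ 2 + p 1 ^ 2 → |c * Afun a p| ≤ M := by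
  obtain ⟨L, hL⟩ := exists_norm_deriv_le_of_le_one ha ha0
  refine ⟨max L K, fun p c hc => ?_⟩
  set u := p 0 ^ 2 + p 1 ^ 2
  rw [abs_mul]
  rcases le_or_gt u 1 with hu | hu
  · have hc1 : |c| ≤ 1 := (sq_le_one_iff_abs_le_one c).1 (hc.trans hu)
    have hA : |Afun a p| ≤ L := by
      rw [Afun_eq_integral ha ha0 p, ← Real.norm_eq_abs]
      refine (intervalIntegral.norm_integral_le_of_norm_le_const fun t ht => hL _ ?_).trans
        (by simp)
      rw [uIoc_of_le zero_le_one] at ht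
      nlinarith [ht.1, ht.2, sq_nonneg (p 2), sq_nonneg (p 0), sq_nonneg (p 1)]
    calc |c| * |Afun a p| ≤ 1 * L := mul_le_mul hc1 hA (abs_nonneg _) zero_le_one
      _ ≤ max L K := by simp
  · have hcu : |c| ≤ u := by nlinarith [sq_abs c, abs_nonneg c]
    have hA : |Afun a p| ≤ K / u := by
      rw [Afun, if_neg (by linarith), abs_div, abs_of_pos (show 0 < u by linarith)]
      exact div_le_div_of_nonneg_right (haK _) (by linarith)
    calc |c| * |Afun a p| ≤ u * (K / u) := mul_le_mul hcu hA (abs_nonneg _) (by linarith)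
      _ = K := mul_div_cancel₀ _ (by linarith)
      _ ≤ max L K := le_max_right _ _

end Afun

lemma contDiff_Xf {n : WithTop ℕ∞} : ContDiff ℝ n Xf :=
  contDiff_pi.2 fun i => by fin_cases i <;> simp [Xf] <;> fun_prop

lemma contDiff_Yf {n : WithTop ℕ∞} : ContDiff ℝ n Yf :=
  contDiff_pi.2 fun i => by fin_cases i <;> simp [Yf] <;> fun_prop

lemma contDiff_Zf {n : WithTop ℕ∞} : ContDiff ℝ n Zf :=
  contDiff_pi.2 fun i => by fin_cases i <;> simp [Zf] <;> fun_prop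

lemma norm_Xf_le (p : Fin 3 → ℝ) : ‖Xf p‖ ≤ ‖p‖ := by
  refine (pi_norm_le_iff_of_nonneg (norm_nonneg p)).2 fun i => ?_
  fin_cases i <;> simp [Xf, -Real.norm_eq_abs, norm_le_pi_norm]

lemma norm_Yf_le (p : Fin 3 → ℝ) : ‖Yf p‖ ≤ ‖p‖ := by
  refine (pi_norm_le_iff_of_nonneg (norm_nonneg p)).2 fun i => ?_
  fin_cases i <;> simp [Yf, -Real.norm_eq_abs, norm_le_pi_norm]

lemma norm_Zf_le (p : Fin 3 → ℝ) : ‖Zf p‖ ≤ ‖p‖ := by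
  refine (pi_norm_le_iff_of_nonneg (norm_nonneg p)).2 fun i => ?_
  fin_cases i <;> simp [Zf, -Real.norm_eq_abs, norm_le_pi_norm]

section RadialPerturbation

variable {E : Type*} [NormedAddCommGroup E] [NormedSpace ℝ E]

lemma locallyLipschitz_add_mul_smul_self {L : E → E} {ℓ A : E → ℝ} (hL : ContDiff ℝ 1 L)
    (hℓ : ContDiff ℝ 1 ℓ) (hA : LocallyLipschitz A) :
    LocallyLipschitz fun p => L p + (ℓ p * A p) • p := by
  have hΨ : ContDiff ℝ 1 fun q : E × ℝ => L q.1 + (ℓ q.1 * q.2) • q.1 := by fun_prop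
  exact hΨ.locallyLipschitz.comp (LocallyLipschitz.id.prodMk hA)

lemma norm_add_smul_self_le {v p : E} {c M : ℝ} (hv : ‖v‖ ≤ ‖p‖) (hc : |c| ≤ M) :
    ‖v + c • p‖ ≤ (1 + M) * (1 + ‖p‖) := by
  have := (norm_add_le v (c • p)).trans (add_le_add hv (norm_smul_le c p))
  rw [Real.norm_eq_abs] at this
  nlinarith [norm_nonneg p, abs_nonneg c]

end RadialPerturbation

/-- If `a` is `C^∞`, vanishes on `(−∞,0]` and is bounded, then each Cairns–Ghys
perturbed vector field `X̃, Ỹ, Z̃` is complete: through every point there is a global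
integral curve defined on all of `ℝ`. -/
theorem cairnsGhys_fields_complete
    (a : ℝ → ℝ) (ha : ContDiff ℝ (⊤ : ℕ∞) a) (ha0 : ∀ s : ℝ, s ≤ 0 → a s = 0)
    (K : ℝ) (haK : ∀ s : ℝ, |a s| ≤ K) :
    (∀ p₀ : Fin 3 → ℝ, ∃ γ : ℝ → (Fin 3 → ℝ), γ 0 = p₀ ∧
      ∀ t : ℝ, HasDerivAt γ (Xt a (γ t)) t) ∧
    (∀ p₀ : Fin 3 → ℝ, ∃ γ : ℝ → (Fin 3 → ℝ), γ 0 = p₀ ∧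
      ∀ t : ℝ, HasDerivAt γ (Yt a (γ t)) t) ∧
    (∀ p₀ : Fin 3 → ℝ, ∃ γ : ℝ → (Fin 3 → ℝ), γ 0 = p₀ ∧
      ∀ t : ℝ, HasDerivAt γ (Zt (γ t)) t) := by
  have ha2 : ContDiff ℝ 2 a := ha.of_le (WithTop.coe_le_coe.2 le_top)
  have hA := locallyLipschitz_Afun ha2 ha0
  obtain ⟨M, hM⟩ := exists_abs_mul_Afun_le (ha2.of_le one_le_two) ha0 haK
  refine ⟨fun p₀ => ?_, fun p₀ => ?_, fun p₀ => ?_⟩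
  · exact (locallyLipschitz_add_mul_smul_self contDiff_Xf (by fun_prop) hA
      ).exists_isIntegralCurve_of_linearGrowth
      (fun p => norm_add_smul_self_le (norm_Xf_le p) (hM p (p 0) (by nlinarith))) p₀
  · exact (locallyLipschitz_add_mul_smul_self contDiff_Yf (ℓ := fun p => -p 1) (by fun_prop) hA
      ).exists_isIntegralCurve_of_linearGrowth
      (fun p => norm_add_smul_self_le (norm_Yf_le p) (hM p (-p 1) (by nlinarith))) p₀
  · exact contDiff_Zf.locallyLipschitz.exists_isIntegralCurve_of_linearGrowth (C := 1)
      (fun p => by linarith [norm_Zf_le p, norm_nonneg p]) p₀
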